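/- (Lemma: singular points on the unit circle.) Fix σ₊, σ₋ ∈ [0,2π) and set σ = (σ₊−σ₋)/2. Let φ⁽±⁾ ∈ ℝ satisfy cos φ⁽±⁾ = (1/√2)cos σ and sin φ⁽±⁾ = ±√(1 − cos²σ/2), and set t⁽±⁾ = φ⁽±⁾ − σ. For θ ∈ [0,2π) with sin²θ ≥ 1/2 define φ̃(θ) ∈ ℝ by cos φ̃(θ) = √2 cos θ, sin φ̃(θ) = sgn(sin θ)√(2sin²θ−1), set f⁺(θ) = e^{i(θ+σ₊)}e^{iφ̃(θ)}, f⁻(θ) = e^{i(θ−σ₋)}e^{iφ̃(θ)}, and Λ(θ) = 1 − (e^{−iσ₊}/√2)f⁺(θ) − (e^{iσ₊}/√2)f⁻(θ) + f⁺(θ)f⁻(θ). Then the set {e^{iθ} : θ ∈ [0,2π), sin²θ ≥ 1/2, Λ(θ) = 0} equals S⁺ ∪ S⁻, where S⁺ = {±(sin t⁽⁺⁾ + i(√2 − cos t⁽⁺⁾))/√(3 − 2√2 cos t⁽⁺⁾)} if cos t⁽⁺⁾ ≤ 1/√2 and S⁺ = ∅ otherwise, and S⁻ = {±(sin t⁽⁻⁾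 + i(√2 − cos t⁽⁻⁾))/√(3 − 2√2 cos t⁽⁻⁾)} if cos t⁽⁻⁾ ≤ 1/√2 and S⁻ = ∅ otherwise. -/

import Mathlib

noncomputable section
open Complex

/-- The boundary value `e^{iφ̃(θ)}` with `cos φ̃(θ) = √2 cos θ`,
`sin φ̃(θ) = sgn(sin θ)·√(2sin²θ − 1)`. -/
def eiPhiTilde (θ : ℝ) : ℂ :=
  ((Real.sqrt 2 * Real.cos θ : ℝ) : ℂ)
    + Complex.I * ((Real.sign (Real.sin θ) * Real.sqrt (2 * Real.sin θ ^ 2 - 1) : ℝ) : ℂ)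

/-- Boundary value `f̃₀⁽⁺⁾(e^{iθ}) = e^{i(θ+σ₊)}e^{iφ̃(θ)}`. -/
def fPlus (σp θ : ℝ) : ℂ := Complex.exp (Complex.I * ((θ + σp : ℝ) : ℂ)) * eiPhiTilde θ

/-- Boundary value `f̃₀⁽⁻⁾(e^{iθ}) = e^{i(θ−σ₋)}e^{iφ̃(θ)}`. -/
def fMinus (σm θ : ℝ) : ℂ := Complex.exp (Complex.I * ((θ - σm : ℝ) : ℂ)) * eiPhiTilde θ

/-- The denominator `Λ̃₀` on the unit circle. -/
def LambdaBd (σp σm θ : ℝ) : ℂ :=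
  1 - Complex.exp (-Complex.I * (σp : ℂ)) / (Real.sqrt 2 : ℂ) * fPlus σp θ
    - Complex.exp (Complex.I * (σp : ℂ)) / (Real.sqrt 2 : ℂ) * fMinus σm θ
    + fPlus σp θ * fMinus σm θ

/-- The candidate pair of singular points associated to `t = t⁽±⁾`. -/
def singPair (t : ℝ) : Set ℂ :=
  if Real.cos t ≤ 1 / Real.sqrt 2 then
    { z : ℂ | z = (((Real.sin t : ℝ) : ℂ) + Complex.I * ((Real.sqrt 2 - Real.cos t : ℝ) : ℂ))
          / ((Real.sqrt (3 - 2 * Real.sqrt 2 * Real.cos t) : ℝ) : ℂ)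
        ∨ z = -((((Real.sin t : ℝ) : ℂ) + Complex.I * ((Real.sqrt 2 - Real.cos t : ℝ) : ℂ))
          / ((Real.sqrt (3 - 2 * Real.sqrt 2 * Real.cos t) : ℝ) : ℂ)) }
  else ∅

/-- Candidate singular point. -/
def z0 (t : ℝ) : ℂ :=
  (((Real.sin t : ℝ) : ℂ) + Complex.I * ((Real.sqrt 2 - Real.cos t : ℝ) : ℂ))
    / ((Real.sqrt (3 - 2 * Real.sqrt 2 * Real.cos t) : ℝ) : ℂ)

lemma expI (θ : ℝ) : Complex.exp (Complex.I * θ) = ↑(Real.cos θ) + ↑(Real.sin θ) * I := by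
  rw [mul_comm, Complex.exp_mul_I, Complex.ofReal_cos, Complex.ofReal_sin]

lemma cplx_pair (a b c d : ℝ) : (↑a + ↑b*I : ℂ) = ↑c + ↑d*I ↔ (a = c ∧ b = d) := by
  constructor
  · intro h
    have hre := congrArg Complex.re h
    have him := congrArg Complex.im h
    simp at hre him
    exact ⟨hre, him⟩
  · rintro ⟨rfl, rfl⟩; rfl

lemma unitvec (x y a b : ℝ) (h1 : x^2+y^2=1) (h2 : a^2+b^2=1) (h3 : x*b = y*a) :
    (x=a ∧ y=b) ∨ (x=-a ∧ y=-b) := by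
  have hsq : (x*a+y*b)^2 = 1^2 := by nlinarith [h3]
  rcases sq_eq_sq_iff_eq_or_eq_neg.mp hsq with h | h
  · left
    refine ⟨?_, ?_⟩
    · have h4 : (x-a)^2 = 0 := by nlinarith [sq_nonneg (y-b)]
      have := pow_eq_zero_iff (n := 2) (by norm_num) |>.mp h4
      linarith
    · have h4 : (y-b)^2 = 0 := by nlinarith [sq_nonneg (x-a)]
      have := pow_eq_zero_iff (n := 2) (by norm_num) |>.mp h4
      linarith
  · right
    refine ⟨?_, ?_⟩
    · have h4 : (x+a)^2 = 0 := by nlinarith [sq_nonneg (y+b)]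
      have := pow_eq_zero_iff (n := 2) (by norm_num) |>.mp h4
      linarith
    · have h4 : (y+b)^2 = 0 := by nlinarith [sq_nonneg (x+a)]
      have := pow_eq_zero_iff (n := 2) (by norm_num) |>.mp h4
      linarith

lemma core (x y c s : ℝ) (hxy : x^2+y^2=1) (hcs : c^2+s^2=1) (hy2 : 1/2 ≤ y^2) :
    (Real.sqrt 2*x^2 - y*(Real.sign y * Real.sqrt (2*y^2-1)) = c ∧
     Real.sqrt 2*x*y + x*(Real.sign y * Real.sqrt (2*y^2-1)) = s) ↔
    (c ≤ 1/Real.sqrt 2 ∧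
      ((x = s/Real.sqrt (3-2*Real.sqrt 2*c) ∧ y = (Real.sqrt 2-c)/Real.sqrt (3-2*Real.sqrt 2*c)) ∨
       (x = -(s/Real.sqrt (3-2*Real.sqrt 2*c)) ∧ y = -((Real.sqrt 2-c)/Real.sqrt (3-2*Real.sqrt 2*c))))) := by
  set q := Real.sqrt 2 with hq
  have hq2 : q^2 = 2 := Real.sq_sqrt (by norm_num)
  have hq0 : 0 < q := Real.sqrt_pos.mpr (by norm_num)
  have hc1 : c^2 ≤ 1 := by nlinarith
  have hD0 : 0 < 3 - 2*q*c := by nlinarith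
  set rD := Real.sqrt (3-2*q*c) with hrD
  have hrD2 : rD^2 = 3-2*q*c := Real.sq_sqrt hD0.le
  have hrD0 : 0 < rD := Real.sqrt_pos.mpr hD0
  have hy0 : y ≠ 0 := by intro h; rw [h] at hy2; norm_num at hy2
  have h2y : 0 ≤ 2*y^2 - 1 := by nlinarith
  set g := Real.sign y * Real.sqrt (2*y^2-1) with hgdef
  have hg2 : g^2 = 2*y^2 - 1 := by
    rcases lt_or_gt_of_ne hy0 with h | h
    · rw [hgdef, Real.sign_of_neg h, mul_pow, Real.sq_sqrt h2y]; ring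
    · rw [hgdef, Real.sign_of_pos h, mul_pow, Real.sq_sqrt h2y]; ring
  constructor
  · rintro ⟨h1, h2⟩
    have hyg : 0 ≤ y * g := by
      rcases lt_or_gt_of_ne hy0 with h | h
      · rw [hgdef, Real.sign_of_neg h]
        have := Real.sqrt_nonneg (2*y^2-1); nlinarith
      · rw [hgdef, Real.sign_of_pos h]
        have := Real.sqrt_nonneg (2*y^2-1); positivity
    have hc : c ≤ 1/q := by
      rw [le_div_iff₀ hq0]
      nlinarith
    refine ⟨hc, ?_⟩
    have h0 : (q-c)*x = s*y := by linear_combination x*h1 + y*h2 - q*x*hxy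
    have hab : (s/rD)^2 + ((q-c)/rD)^2 = 1 := by
      field_simp
      linear_combination hcs + hq2 - hrD2
    have hcross : x*((q-c)/rD) = y*(s/rD) := by
      field_simp
      linear_combination h0
    exact unitvec x y (s/rD) ((q-c)/rD) hxy hab hcross
  · rintro ⟨hc, hcase⟩
    have hqc : q*c ≤ 1 := by
      rw [le_div_iff₀ hq0] at hc; linarith
    have hqcgt : c < q := by nlinarith
    have hgval : Real.sqrt (2*((q-c)/rD)^2 - 1) = (1-q*c)/rD := by
      have he : 2*((q-c)/rD)^2 - 1 = ((1-q*c)/rD)^2 := by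
        field_simp
        linear_combination (2-c^2)*hq2 - hrD2
      rw [he, Real.sqrt_sq (div_nonneg (by linarith) hrD0.le)]
    have hb0 : 0 < (q-c)/rD := div_pos (by linarith) hrD0
    rcases hcase with ⟨hx, hy⟩ | ⟨hx, hy⟩
    · have hsgn : Real.sign y = 1 := Real.sign_of_pos (hy ▸ hb0)
      have hgv : g = (1-q*c)/rD := by
        rw [hgdef, hsgn, one_mul, hy, hgval]
      constructor
      · rw [hx, hy, hgv]
        field_simp
        linear_combination q*hcs + c*hq2 - c*hrD2
      · rw [hx, hy, hgv]
        field_simp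
        linear_combination s*hq2 - s*hrD2
    · have hsgn : Real.sign y = -1 := Real.sign_of_neg (by rw [hy]; linarith [hb0])
      have hgv : g = -((1-q*c)/rD) := by
        have h5 : 2*y^2-1 = 2*((q-c)/rD)^2-1 := by rw [hy]; ring
        rw [hgdef, hsgn, h5, hgval]; ring
      constructor
      · rw [hx, hy, hgv]
        field_simp
        linear_combination q*hcs + c*hq2 - c*hrD2
      · rw [hx, hy, hgv]
        field_simp
        linear_combination s*hq2 - s*hrD2

lemma DposC (t : ℝ) : (0:ℝ) < 3 - 2*Real.sqrt 2*Real.cos t := by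
  have h1 := Real.neg_one_le_cos t
  have h2 := Real.cos_le_one t
  nlinarith [Real.sq_sqrt (show (0:ℝ) ≤ 2 by norm_num), Real.sqrt_nonneg 2]

lemma lemB (θ t : ℝ) (hθ : 1/2 ≤ Real.sin θ^2) :
    Complex.exp (Complex.I*θ) * eiPhiTilde θ = Complex.exp (Complex.I*t) ↔
    (Real.cos t ≤ 1/Real.sqrt 2 ∧
      (Complex.exp (Complex.I*θ) = z0 t ∨ Complex.exp (Complex.I*θ) = -z0 t)) := by
  have hcore := core (Real.cos θ) (Real.sin θ) (Real.cos t) (Real.sin t)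
    (by rw [add_comm]; exact Real.sin_sq_add_cos_sq θ)
    (by rw [add_comm]; exact Real.sin_sq_add_cos_sq t) hθ
  have hD0 : (0:ℝ) < 3 - 2*Real.sqrt 2*Real.cos t := DposC t
  have hrD0 : (0:ℝ) < Real.sqrt (3-2*Real.sqrt 2*Real.cos t) := Real.sqrt_pos.mpr hD0
  have hrDne : ((Real.sqrt (3-2*Real.sqrt 2*Real.cos t) : ℝ) : ℂ) ≠ 0 := by
    exact_mod_cast hrD0.ne'
  set rD := Real.sqrt (3-2*Real.sqrt 2*Real.cos t) with hrD
  have hlhs : Complex.exp (Complex.I*θ) * eiPhiTilde θ =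
      ↑(Real.sqrt 2*Real.cos θ^2 - Real.sin θ*(Real.sign (Real.sin θ) * Real.sqrt (2*Real.sin θ^2-1)))
      + ↑(Real.sqrt 2*Real.cos θ*Real.sin θ + Real.cos θ*(Real.sign (Real.sin θ) * Real.sqrt (2*Real.sin θ^2-1)))*I := by
    rw [expI, eiPhiTilde]
    push_cast
    ring_nf
    simp [Complex.I_sq]
    ring
  have heq1 : (Complex.exp (Complex.I*θ) * eiPhiTilde θ = Complex.exp (Complex.I*t)) ↔
      (Real.sqrt 2*Real.cos θ^2 - Real.sin θ*(Real.sign (Real.sin θ) * Real.sqrt (2*Real.sin θ^2-1)) = Real.cos t ∧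
       Real.sqrt 2*Real.cos θ*Real.sin θ + Real.cos θ*(Real.sign (Real.sin θ) * Real.sqrt (2*Real.sin θ^2-1)) = Real.sin t) := by
    rw [hlhs, expI t, cplx_pair]
  have heq2 : (Complex.exp (Complex.I*θ) = z0 t) ↔
      (Real.cos θ = Real.sin t/rD ∧ Real.sin θ = (Real.sqrt 2-Real.cos t)/rD) := by
    rw [expI, z0, eq_div_iff hrDne]
    have hl : ((Real.cos θ:ℂ) + ↑(Real.sin θ)*I) * (↑rD:ℂ) = ↑(Real.cos θ*rD) + ↑(Real.sin θ*rD)*I := by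
      push_cast; ring
    have hr : ((Real.sin t:ℂ)) + I*↑(Real.sqrt 2-Real.cos t) = ↑(Real.sin t) + ↑(Real.sqrt 2-Real.cos t)*I := by
      ring
    rw [hl, hr, cplx_pair, eq_div_iff hrD0.ne', eq_div_iff hrD0.ne']
  have heq3 : (Complex.exp (Complex.I*θ) = -z0 t) ↔
      (Real.cos θ = -(Real.sin t/rD) ∧ Real.sin θ = -((Real.sqrt 2-Real.cos t)/rD)) := by
    have hz : -z0 t = (↑(-Real.sin t) + ↑(-(Real.sqrt 2-Real.cos t))*I) / (↑rD:ℂ) := by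
      rw [z0]; push_cast; ring
    rw [expI, hz, eq_div_iff hrDne]
    have hl : ((Real.cos θ:ℂ) + ↑(Real.sin θ)*I) * (↑rD:ℂ) = ↑(Real.cos θ*rD) + ↑(Real.sin θ*rD)*I := by
      push_cast; ring
    rw [hl, cplx_pair,
      show -(Real.sin t/rD) = (-Real.sin t)/rD by ring,
      show -((Real.sqrt 2-Real.cos t)/rD) = (-(Real.sqrt 2-Real.cos t))/rD by ring,
      eq_div_iff hrD0.ne', eq_div_iff hrD0.ne']
  rw [heq1, hcore, heq2, heq3]
lemma factorization2 (σp σm φplus φminus : ℝ)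
    (hφpc : Real.cos φplus = (1 / Real.sqrt 2) * Real.cos ((σp - σm) / 2))
    (hφps : Real.sin φplus = Real.sqrt (1 - Real.cos ((σp - σm) / 2) ^ 2 / 2))
    (hφmc : Real.cos φminus = (1 / Real.sqrt 2) * Real.cos ((σp - σm) / 2))
    (hφms : Real.sin φminus = -Real.sqrt (1 - Real.cos ((σp - σm) / 2) ^ 2 / 2))
    (θ : ℝ) :
    LambdaBd σp σm θ = Complex.exp (Complex.I * ((σp - σm : ℝ) : ℂ)) *
      (Complex.exp (Complex.I*θ) * eiPhiTilde θ - Complex.exp (Complex.I * ((φplus - (σp - σm)/2 : ℝ) : ℂ))) *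
      (Complex.exp (Complex.I*θ) * eiPhiTilde θ - Complex.exp (Complex.I * ((φminus - (σp - σm)/2 : ℝ) : ℂ))) := by
  have hq0 : (0:ℝ) < Real.sqrt 2 := Real.sqrt_pos.mpr (by norm_num)
  have hqne : ((Real.sqrt 2 : ℝ) : ℂ) ≠ 0 := by exact_mod_cast hq0.ne'
  set σd := (σp - σm)/2 with hσd
  -- basic exp facts
  have h1 : Real.cos φminus = Real.cos φplus := by rw [hφmc, hφpc]
  have h2 : Real.sin φminus = -Real.sin φplus := by rw [hφms, hφps]
  have hprod : Complex.exp (Complex.I * (φplus:ℂ)) * Complex.exp (Complex.I * (φminus:ℂ)) = 1 := by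
    rw [expI, expI, h1, h2]
    have h3 : ((Real.sin φplus:ℂ))^2 + ((Real.cos φplus:ℂ))^2 = 1 := by
      exact_mod_cast congrArg (Complex.ofReal) (Real.sin_sq_add_cos_sq φplus)
    push_cast [-Complex.ofReal_cos, -Complex.ofReal_sin]
    linear_combination h3 - ((Real.sin φplus:ℂ))^2 * Complex.I_sq
  have hcφ : Real.sqrt 2 * Real.cos φplus = Real.cos σd := by
    rw [hφpc]
    field_simp
  have hcφC : ((Real.sqrt 2:ℝ):ℂ) * ↑(Real.cos φplus) = ↑(Real.cos σd) := by
    exact_mod_cast congrArg (Complex.ofReal) hcφ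
  have hsum : (Real.sqrt 2:ℂ) * (Complex.exp (Complex.I * (φplus:ℂ)) + Complex.exp (Complex.I * (φminus:ℂ)))
      = 2 * ↑(Real.cos σd) := by
    rw [expI, expI, h1, h2]
    push_cast [-Complex.ofReal_cos, -Complex.ofReal_sin]
    linear_combination 2*hcφC
  set p := eiPhiTilde θ with hp
  set eθ := Complex.exp (Complex.I*(θ:ℂ)) with heθ
  set ep := Complex.exp (Complex.I*(σp:ℂ)) with hep
  set em := Complex.exp (Complex.I*(σm:ℂ)) with hem
  set eσ := Complex.exp (Complex.I*(σd:ℂ)) with heσ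
  set E := Complex.exp (Complex.I*((σp-σm:ℝ):ℂ)) with hE
  set A := Complex.exp (Complex.I*((φplus-σd:ℝ):ℂ)) with hA
  set B := Complex.exp (Complex.I*((φminus-σd:ℝ):ℂ)) with hB
  set X := Complex.exp (Complex.I*((θ-σm:ℝ):ℂ)) with hX
  set u := Complex.exp (-Complex.I*(σp:ℂ)) with hu
  set Fp := Complex.exp (Complex.I*(φplus:ℂ)) with hFp
  set Fm := Complex.exp (Complex.I*(φminus:ℂ)) with hFm
  have r1 : A*eσ = Fp := by
    rw [hA, heσ, hFp, ← Complex.exp_add]; congr 1; push_cast; ring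
  have r2 : B*eσ = Fm := by
    rw [hB, heσ, hFm, ← Complex.exp_add]; congr 1; push_cast; ring
  have r5 : eσ*eσ = E := by
    rw [heσ, hE, ← Complex.exp_add]; congr 1; rw [hσd]; push_cast; ring
  have r6 : Complex.exp (Complex.I*((θ+σp:ℝ):ℂ)) = eθ*ep := by
    rw [heθ, hep, ← Complex.exp_add]; congr 1; push_cast; ring
  have r7 : X*em = eθ := by
    rw [hX, hem, heθ, ← Complex.exp_add]; congr 1; push_cast; ring
  have r8 : u*ep = 1 := by
    rw [hu, hep, ← Complex.exp_add]; norm_num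
  have r9 : E*em = ep := by
    rw [hE, hem, hep, ← Complex.exp_add]; congr 1; push_cast; ring
  have r10 : 2*(Real.cos σd:ℂ)*eσ = eσ^2+1 := by
    rw [heσ, expI]
    have h3 : ((Real.sin σd:ℂ))^2 + ((Real.cos σd:ℂ))^2 = 1 := by
      exact_mod_cast congrArg (Complex.ofReal) (Real.sin_sq_add_cos_sq σd)
    push_cast [-Complex.ofReal_cos, -Complex.ofReal_sin]
    linear_combination h3 - (Real.sin σd:ℂ)^2*Complex.I_sq
  have q2 : (Real.sqrt 2:ℂ)*(Real.sqrt 2:ℂ) = 2 := by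
    exact_mod_cast congrArg (Complex.ofReal) (Real.mul_self_sqrt (show (0:ℝ) ≤ 2 by norm_num))
  rw [LambdaBd, fPlus, fMinus, r6, ← hp, ← hX, ← hu, ← hep]
  field_simp
  linear_combination (-eθ*p)*r8 + ((Real.sqrt 2:ℂ)*E*eθ*p^2 - E*p)*r7
    + (-(Real.sqrt 2:ℂ)*eθ*p^2*X + p*X)*r9 - (Real.sqrt 2:ℂ)*hprod
    + (Real.sqrt 2:ℂ)*A*B*r5 - (Real.sqrt 2:ℂ)*B*eσ*r1 - (Real.sqrt 2:ℂ)*Fp*r2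
    + eθ*p*r10 + eθ*p*eσ*hsum + (Real.sqrt 2:ℂ)*eθ*p*eσ*r1 + (Real.sqrt 2:ℂ)*eθ*p*eσ*r2
    - (Real.sqrt 2:ℂ)*eθ*p*(A+B)*r5 + eθ*p*r5


lemma exists_theta (z : ℂ) (hz : ‖z‖ = 1) :
    ∃ θ : ℝ, θ ∈ Set.Ico 0 (2*Real.pi) ∧ Complex.exp (Complex.I*(θ:ℂ)) = z := by
  have hbase : Complex.exp (Complex.I*(z.arg:ℂ)) = z := by
    have := Complex.norm_mul_exp_arg_mul_I z
    rw [hz] at this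
    simpa [mul_comm] using this
  have hpi := Real.pi_pos
  have h1 := Complex.arg_le_pi z
  have h2 := Complex.neg_pi_lt_arg z
  rcases le_or_gt 0 z.arg with h | h
  · exact ⟨z.arg, ⟨h, by linarith⟩, hbase⟩
  · refine ⟨z.arg + 2*Real.pi, ⟨by linarith, by linarith⟩, ?_⟩
    rw [show ((z.arg + 2*Real.pi : ℝ):ℂ) = (z.arg:ℂ) + 2*Real.pi by push_cast; ring,
      mul_add, Complex.exp_add, hbase]
    rw [show Complex.I * (2*(Real.pi:ℂ)) = 2*Real.pi*I by ring, Complex.exp_two_pi_mul_I, mul_one]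

lemma z0_pair (t : ℝ) : z0 t = ↑(Real.sin t/Real.sqrt (3-2*Real.sqrt 2*Real.cos t))
    + ↑((Real.sqrt 2-Real.cos t)/Real.sqrt (3-2*Real.sqrt 2*Real.cos t))*I := by
  rw [z0]; push_cast; ring

lemma abs_z0 (t : ℝ) : ‖z0 t‖ = 1 := by
  have hD0 := DposC t
  have hrD2 : Real.sqrt (3-2*Real.sqrt 2*Real.cos t)^2 = 3-2*Real.sqrt 2*Real.cos t :=
    Real.sq_sqrt hD0.le
  have hq2 : Real.sqrt 2^2 = 2 := Real.sq_sqrt (by norm_num)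
  have hcs : Real.sin t^2 + Real.cos t^2 = 1 := Real.sin_sq_add_cos_sq t
  rw [z0_pair, Complex.norm_add_mul_I]
  rw [show (Real.sin t/Real.sqrt (3-2*Real.sqrt 2*Real.cos t))^2
      + ((Real.sqrt 2-Real.cos t)/Real.sqrt (3-2*Real.sqrt 2*Real.cos t))^2 = 1 by
    field_simp
    linear_combination hcs + hq2 - hrD2]
  exact Real.sqrt_one

theorem stmt_6
    (σp σm : ℝ) (hσp : σp ∈ Set.Ico 0 (2 * Real.pi)) (hσm : σm ∈ Set.Ico 0 (2 * Real.pi))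
    (φplus φminus : ℝ)
    (hφpc : Real.cos φplus = (1 / Real.sqrt 2) * Real.cos ((σp - σm) / 2))
    (hφps : Real.sin φplus = Real.sqrt (1 - Real.cos ((σp - σm) / 2) ^ 2 / 2))
    (hφmc : Real.cos φminus = (1 / Real.sqrt 2) * Real.cos ((σp - σm) / 2))
    (hφms : Real.sin φminus = -Real.sqrt (1 - Real.cos ((σp - σm) / 2) ^ 2 / 2)) :
    { z : ℂ | ∃ θ : ℝ, θ ∈ Set.Ico 0 (2 * Real.pi) ∧ 1 / 2 ≤ Real.sin θ ^ 2
        ∧ LambdaBd σp σm θ = 0 ∧ z = Complex.exp (Complex.I * (θ : ℂ)) }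
      = singPair (φplus - (σp - σm) / 2) ∪ singPair (φminus - (σp - σm) / 2) := by
  have hfact := factorization2 σp σm φplus φminus hφpc hφps hφmc hφms
  set tp := φplus - (σp - σm) / 2 with htp
  set tm := φminus - (σp - σm) / 2 with htm
  ext z
  simp only [Set.mem_setOf_eq, Set.mem_union]
  constructor
  · rintro ⟨θ, hθI, hθ2, hΛ, rfl⟩
    rw [hfact θ] at hΛ
    rcases mul_eq_zero.mp hΛ with h | h
    · rcases mul_eq_zero.mp h with h' | h'
      · exact absurd h' (Complex.exp_ne_zero _)
      · have hw := sub_eq_zero.mp h'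
        have hres := (lemB θ tp hθ2).mp hw
        left
        rw [singPair, if_pos hres.1, Set.mem_setOf_eq]
        have h2 := hres.2
        simp only [z0] at h2
        exact h2
    · have hw := sub_eq_zero.mp h
      have hres := (lemB θ tm hθ2).mp hw
      right
      rw [singPair, if_pos hres.1, Set.mem_setOf_eq]
      have h2 := hres.2
      simp only [z0] at h2
      exact h2
  · have main : ∀ t : ℝ, (Real.cos t ≤ 1/Real.sqrt 2) →
        (z = z0 t ∨ z = -z0 t) →
        ∃ θ : ℝ, θ ∈ Set.Ico 0 (2*Real.pi) ∧ 1/2 ≤ Real.sin θ^2 ∧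
          (Complex.exp (Complex.I*(θ:ℂ)) * eiPhiTilde θ = Complex.exp (Complex.I*(t:ℂ))) ∧
          z = Complex.exp (Complex.I*(θ:ℂ)) := by
      intro t hct hz
      have habs : ‖z‖ = 1 := by
        rcases hz with rfl | rfl
        · exact abs_z0 t
        · rw [norm_neg]; exact abs_z0 t
      obtain ⟨θ, hθI, hθz⟩ := exists_theta z habs
      have him : Real.sin θ = z.im := by
        rw [← hθz, expI]; simp only [Complex.add_im, Complex.neg_im, Complex.ofReal_im, Complex.mul_im, Complex.ofReal_re, Complex.I_im, Complex.I_re, mul_one, mul_zero, zero_add, add_zero, zero_mul, neg_neg]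
      have hD0 := DposC t
      have hrD2 : Real.sqrt (3-2*Real.sqrt 2*Real.cos t)^2 = 3-2*Real.sqrt 2*Real.cos t :=
        Real.sq_sqrt hD0.le
      have hq2 : Real.sqrt 2^2 = 2 := Real.sq_sqrt (by norm_num)
      have him2 : z.im^2 = ((Real.sqrt 2-Real.cos t)/Real.sqrt (3-2*Real.sqrt 2*Real.cos t))^2 := by
        rcases hz with rfl | rfl
        · rw [z0_pair]; simp only [Complex.add_im, Complex.neg_im, Complex.ofReal_im, Complex.mul_im, Complex.ofReal_re, Complex.I_im, Complex.I_re, mul_one, mul_zero, zero_add, add_zero, zero_mul, neg_neg]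
        · rw [z0_pair]; simp only [Complex.add_im, Complex.neg_im, Complex.ofReal_im, Complex.mul_im, Complex.ofReal_re, Complex.I_im, Complex.I_re, mul_one, mul_zero, zero_add, add_zero, zero_mul, neg_neg]; ring
      have hθ2 : 1/2 ≤ Real.sin θ^2 := by
        rw [him, him2, div_pow, hrD2, le_div_iff₀ hD0]
        nlinarith [sq_nonneg (Real.sqrt 2*Real.cos t - 1), hq2]
      refine ⟨θ, hθI, hθ2, ?_, hθz.symm⟩
      rw [lemB θ t hθ2]
      refine ⟨hct, ?_⟩
      rcases hz with rfl | rfl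
      · left; exact hθz
      · right; exact hθz
    rintro (hmem | hmem)
    · rw [singPair] at hmem
      split_ifs at hmem with hct
      · rw [Set.mem_setOf_eq] at hmem
        have hz : z = z0 tp ∨ z = -z0 tp := by rw [z0]; exact hmem
        obtain ⟨θ, hθI, hθ2, hw, hzz⟩ := main tp hct hz
        refine ⟨θ, hθI, hθ2, ?_, hzz⟩
        rw [hfact θ, sub_eq_zero.mpr hw]
        ring
      · exact absurd hmem (Set.notMem_empty z)
    · rw [singPair] at hmem
      split_ifs at hmem with hct
      · rw [Set.mem_setOf_eq] at hmem
        have hz : z = z0 tm ∨ z = -z0 tm := by rw [z0]; exact hmem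
        obtain ⟨θ, hθI, hθ2, hw, hzz⟩ := main tm hct hz
        refine ⟨θ, hθI, hθ2, ?_, hzz⟩
        rw [hfact θ, sub_eq_zero.mpr hw]
        ring
      · exact absurd hmem (Set.notMem_empty z)
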